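/- For every integer k ≥ 3, if a sparsifiable finite simple graph contains the k×k-grid as a minor, then it contains the (k−2)×(k−2)-grid as an induced minor. -/

import Mathlib

namespace Paper

open SimpleGraph

/-- `(T, β)` is a tree decomposition of `G`. -/
def IsTreeDecomp {V ι : Type} (G : SimpleGraph V) (T : SimpleGraph ι) (β : ι → Set V) : Prop :=
  T.Connected ∧ T.IsAcyclic ∧
  (∀ v : V, ∃ i, v ∈ β i) ∧
  (∀ u v : V, G.Adj u v → ∃ i, u ∈ β i ∧ v ∈ β i) ∧
  (∀ v : V, (SimpleGraph.induce {i | v ∈ β i} T).Connected)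

/-- The treewidth of `G`: the least `w` admitting a tree decomposition
with all bags of size at most `w + 1`. -/
noncomputable def treewidth {V : Type} (G : SimpleGraph V) : ℕ :=
  sInf {w | ∃ (ι : Type) (T : SimpleGraph ι) (β : ι → Set V),
    IsTreeDecomp G T β ∧ ∀ i, (β i).ncard ≤ w + 1}

/-- `X` is a minor model of `H` in `G`. -/
def IsMinorModel {V W : Type} (G : SimpleGraph V) (H : SimpleGraph W) (X : W → Set V) : Prop :=
  Pairwise (fun u v => Disjoint (X u) (X v)) ∧
  (∀ w : W, (SimpleGraph.induce (X w) G).Connected) ∧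
  (∀ u v : W, H.Adj u v → ∃ a ∈ X u, ∃ b ∈ X v, G.Adj a b)

/-- `X` is an induced minor model of `H` in `G`. -/
def IsInducedMinorModel {V W : Type} (G : SimpleGraph V) (H : SimpleGraph W)
    (X : W → Set V) : Prop :=
  IsMinorModel G H X ∧
  ∀ u v : W, u ≠ v → ¬ H.Adj u v → ∀ a ∈ X u, ∀ b ∈ X v, ¬ G.Adj a b

def ContainsMinor {V W : Type} (G : SimpleGraph V) (H : SimpleGraph W) : Prop :=
  ∃ X : W → Set V, IsMinorModel G H X

def ContainsInducedMinor {V W : Type} (G : SimpleGraph V) (H : SimpleGraph W) : Prop :=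
  ∃ X : W → Set V, IsInducedMinorModel G H X

/-- The `k × k` grid graph. -/
def grid (k : ℕ) : SimpleGraph (Fin k × Fin k) where
  Adj u v := Nat.dist u.1.val v.1.val + Nat.dist u.2.val v.2.val = 1
  symm := ⟨by intro u v h; simpa [Nat.dist_comm] using h⟩
  loopless := ⟨by intro u h; simp [Nat.dist_self] at h⟩

/-- A vertex `v` is sparsifiable in `G`. -/
def SparsifiableVertex {V : Type} (G : SimpleGraph V) (v : V) : Prop :=
  (G.neighborSet v).ncard ≤ 2 ∨
  ((G.neighborSet v).ncard = 3 ∧ ∀ u ∈ G.neighborSet v, (G.neighborSet u).ncard ≤ 2) ∨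
  (∃ u w₁ w₂ : V, u ≠ w₁ ∧ u ≠ w₂ ∧ w₁ ≠ w₂ ∧ G.neighborSet v = {u, w₁, w₂} ∧
    (G.neighborSet u).ncard ≤ 2 ∧ G.Adj w₁ w₂)

/-- A graph is sparsifiable if all of its vertices are. -/
def Sparsifiable {V : Type} (G : SimpleGraph V) : Prop := ∀ v : V, SparsifiableVertex G v

/-- `I` is a distance-5 independent set in `G`. -/
def Dist5Indep {V : Type} (G : SimpleGraph V) (I : Set V) : Prop :=
  ∀ u ∈ I, ∀ v ∈ I, u ≠ v → ∀ p : G.Walk u v, 5 ≤ p.length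

/-!
Take a minor model of the `k × k`-grid with the fewest vertices. If some edge `ab` of `G` joins
the branch sets of two non-adjacent inner grid vertices `u` and `v`, minimality forces `a` and `b`
to have degree three, and sparsifiability then puts them in a triangle `abc` whose third vertex
lies in a branch set `X w` with `w` adjacent to both `u` and `v`. Moving `a` from `X u` to `X w`
yields a minor model of the same size with strictly fewer such edges. Once there are none, the
branch sets of the inner `(k - 2) × (k - 2)`-grid form an induced minor model.
-/

section Graph

variable {V : Type} {G : SimpleGraph V}

lemma exists_adj_of_connected_induce {s : Set V} (hs : (G.induce s).Connected)
    (hnt : s.Nontrivial) {a : V} (ha : a ∈ s) : ∃ p ∈ s, G.Adj a p := by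
  have := Set.nontrivial_coe_sort.mpr hnt
  obtain ⟨p, hp⟩ := hs.preconnected.exists_adj_of_nontrivial ⟨a, ha⟩
  exact ⟨p, p.2, hp⟩

lemma connected_induce_insert {s : Set V} (hs : (G.induce s).Connected) {a c : V}
    (hc : c ∈ s) (hac : G.Adj a c) : (G.induce (insert a s)).Connected := by
  rw [← Set.singleton_union]
  exact connected_induce_union Preconnected.of_subsingleton hs.preconnected rfl hc hac

lemma connected_induce_diff_singleton {s : Set V} (hs : (G.induce s).Connected) {a : V}
    (ha : a ∈ s) (hne : (s \ {a}).Nonempty) (hsub : (G.neighborSet a ∩ s).Subsingleton) :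
    (G.induce (s \ {a})).Connected := by
  refine (connected_iff _).mpr ⟨?_, hne.to_subtype⟩
  rintro ⟨u, hus, hua⟩ ⟨v, hvs, hva⟩
  obtain ⟨p, hp⟩ := hs.exists_isPath ⟨u, hus⟩ ⟨v, hvs⟩
  have hleaf : ((G.induce s).neighborSet ⟨a, ha⟩).Subsingleton := fun x hx y hy =>
    Subtype.ext (hsub ⟨hx, x.2⟩ ⟨hy, y.2⟩)
  have hap : ⟨a, ha⟩ ∉ p.support := hp.isTrail.not_mem_support_of_subsingleton_neighborSet
    (fun h => hua (congrArg Subtype.val h).symm) (fun h => hva (congrArg Subtype.val h).symm) hleaf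
  refine ⟨(p.map (Embedding.induce s).toHom).induce (s \ {a}) ?_⟩
  intro x hx
  simp only [Walk.support_map, List.mem_map] at hx
  obtain ⟨y, hy, rfl⟩ := hx
  exact ⟨y.2, fun h => hap ((Subtype.ext h : y = ⟨a, ha⟩) ▸ hy)⟩

end Graph

lemma exists_subset_triple_of_ncard_le_three {α : Type} [Finite α] {s : Set α} {a c : α}
    (hs : s.ncard ≤ 3) (ha : a ∈ s) (hc : c ∈ s) (hac : a ≠ c) : ∃ x, s ⊆ {x, a, c} := by
  have hle : (s \ {a, c}).ncard ≤ 1 := by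
    rw [Set.ncard_sdiff (Set.pair_subset ha hc), Set.ncard_pair hac]
    omega
  have : Nonempty α := ⟨a⟩
  obtain ⟨x, hx⟩ := (Set.ncard_le_one_iff_subset_singleton (Set.toFinite _)).mp hle
  refine ⟨x, fun y hy => ?_⟩
  by_cases hy' : y ∈ ({a, c} : Set α)
  · exact Or.inr hy'
  · exact Or.inl (hx ⟨hy, hy'⟩)

section MinorModel

variable {V W : Type} {G : SimpleGraph V} {H : SimpleGraph W} {X : W → Set V} {a : V} {u w : W}

def closedNbhdUnion (H : SimpleGraph W) (X : W → Set V) (u : W) : Set V :=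
  {x | ∃ z, (z = u ∨ H.Adj u z) ∧ x ∈ X z}

def nonInducedEdges (G : SimpleGraph V) (H : SimpleGraph W) (X : W → Set V) (S : Set W) :
    Set (V × V) :=
  {e | G.Adj e.1 e.2 ∧ ∃ u ∈ S, ∃ v ∈ S, u ≠ v ∧ ¬ H.Adj u v ∧ e.1 ∈ X u ∧ e.2 ∈ X v}

def IsMinimalMinorModel (G : SimpleGraph V) (H : SimpleGraph W) (X : W → Set V) : Prop :=
  MinimalFor (IsMinorModel G H) (fun Y => (⋃ z, Y z).ncard) X

def moveTo (X : W → Set V) (a : V) (w z : W) : Set V :=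
  {x | x = a ∧ z = w ∨ x ≠ a ∧ x ∈ X z}

lemma moveTo_self : moveTo X a w w = insert a (X w) := by
  ext x
  by_cases hx : x = a <;> simp [moveTo, hx]

lemma moveTo_of_ne {z : W} (hz : z ≠ w) : moveTo X a w z = X z \ {a} := by
  ext x
  simp [moveTo, hz, and_comm]

lemma iUnion_moveTo_subset (ha : a ∈ X u) : ⋃ z, moveTo X a w z ⊆ ⋃ z, X z := by
  simp only [Set.subset_def, Set.mem_iUnion]
  rintro x ⟨z, ⟨rfl, -⟩ | ⟨-, hx⟩⟩
  exacts [⟨u, ha⟩, ⟨z, hx⟩]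

namespace IsMinorModel

lemma eq_of_mem (hX : IsMinorModel G H X) {x : V} {z z' : W} (h : x ∈ X z) (h' : x ∈ X z') :
    z = z' :=
  by_contra fun hne => Set.disjoint_left.mp (hX.1 hne) h h'

lemma mem_closedNbhdUnion_iff (hX : IsMinorModel G H X) {x : V} {z : W} (hx : x ∈ X z) :
    x ∈ closedNbhdUnion H X u ↔ z = u ∨ H.Adj u z := by
  constructor
  · rintro ⟨z', hz', hx'⟩
    rwa [hX.eq_of_mem hx hx']
  · exact fun h => ⟨z, h, hx⟩

lemma two_lt_ncard_neighborSet_inter [Finite V] (hX : IsMinorModel G H X) (hXu : X u = {a})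
    (hu : 2 < (H.neighborSet u).ncard) :
    2 < (G.neighborSet a ∩ closedNbhdUnion H X u).ncard := by
  have hnbr : ∀ z, H.Adj u z → ∃ y ∈ X z, G.Adj a y := by
    intro z hz
    obtain ⟨a', ha', y, hy, hay⟩ := hX.2.2 u z hz
    rw [hXu, Set.mem_singleton_iff] at ha'
    exact ⟨y, hy, ha' ▸ hay⟩
  obtain ⟨z₁, z₂, z₃, h₁, h₂, h₃, h₁₂, h₁₃, h₂₃⟩ :=
    (Set.two_lt_ncard_iff (Set.finite_of_ncard_pos (by omega))).mp hu
  obtain ⟨y₁, hy₁, ha₁⟩ := hnbr z₁ h₁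
  obtain ⟨y₂, hy₂, ha₂⟩ := hnbr z₂ h₂
  obtain ⟨y₃, hy₃, ha₃⟩ := hnbr z₃ h₃
  refine (Set.two_lt_ncard_iff).mpr ⟨y₁, y₂, y₃, ⟨ha₁, z₁, Or.inr h₁, hy₁⟩,
    ⟨ha₂, z₂, Or.inr h₂, hy₂⟩, ⟨ha₃, z₃, Or.inr h₃, hy₃⟩, ?_, ?_, ?_⟩
  · rintro rfl; exact h₁₂ (hX.eq_of_mem hy₁ hy₂)
  · rintro rfl; exact h₁₃ (hX.eq_of_mem hy₁ hy₃)
  · rintro rfl; exact h₂₃ (hX.eq_of_mem hy₂ hy₃)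

lemma connected_induce_diff_singleton (hX : IsMinorModel G H X) (ha : a ∈ X u)
    (hne : (X u \ {a}).Nonempty) (hsub : (G.neighborSet a ∩ X u).Subsingleton) (z : W) :
    (G.induce (X z \ {a})).Connected := by
  by_cases hz : z = u
  · subst hz
    exact Paper.connected_induce_diff_singleton (hX.2.1 z) ha hne hsub
  · rw [Set.sdiff_singleton_eq_self fun h => hz (hX.eq_of_mem h ha)]
    exact hX.2.1 z

lemma diff_singleton (hX : IsMinorModel G H X) (ha : a ∈ X u) (hne : (X u \ {a}).Nonempty)
    (hsub : (G.neighborSet a ∩ X u).Subsingleton)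
    (hout : ∀ z, H.Adj u z → ∀ y ∈ X z, ¬ G.Adj a y) :
    IsMinorModel G H (fun z => X z \ {a}) := by
  refine ⟨fun p q hpq => (hX.1 hpq).mono Set.sdiff_subset Set.sdiff_subset,
    hX.connected_induce_diff_singleton ha hne hsub, fun p q hpq => ?_⟩
  obtain ⟨α, hα, β, hβ, hαβ⟩ := hX.2.2 p q hpq
  have hαa : α ≠ a := by
    rintro rfl
    exact hout q (hX.eq_of_mem hα ha ▸ hpq) β hβ hαβ
  have hβa : β ≠ a := by
    rintro rfl
    exact hout p (hX.eq_of_mem hβ ha ▸ hpq.symm) α hα hαβ.symm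
  exact ⟨α, ⟨hα, hαa⟩, β, ⟨hβ, hβa⟩, hαβ⟩

lemma moveTo (hX : IsMinorModel G H X) (ha : a ∈ X u) (huw : H.Adj u w) {u₀ c : V}
    (hu₀ : u₀ ∈ X u) (hau₀ : G.Adj a u₀) (hc : c ∈ X w) (hac : G.Adj a c)
    (hN : G.neighborSet a ∩ closedNbhdUnion H X u ⊆ insert u₀ (X w)) :
    IsMinorModel G H (Paper.moveTo X a w) := by
  have hself : (G.neighborSet a ∩ X u).Subsingleton := by
    refine (Set.subsingleton_singleton (a := u₀)).anti fun y hy => ?_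
    rcases hN ⟨hy.1, u, Or.inl rfl, hy.2⟩ with rfl | hyw
    · rfl
    · exact absurd (hX.eq_of_mem hyw hy.2) huw.ne'
  have hne : (X u \ {a}).Nonempty := ⟨u₀, hu₀, hau₀.ne'⟩
  refine ⟨fun p q hpq => Set.disjoint_left.mpr ?_, fun z => ?_, ?_⟩
  · rintro x (⟨rfl, rfl⟩ | ⟨hxa, hxp⟩) (⟨hxa', rfl⟩ | ⟨hxa', hxq⟩)
    · exact hpq rfl
    · exact hxa' rfl
    · exact hxa hxa'
    · exact hpq (hX.eq_of_mem hxp hxq)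
  · by_cases hz : z = w
    · subst hz
      rw [moveTo_self]
      exact connected_induce_insert (hX.2.1 z) hc hac
    · rw [moveTo_of_ne hz]
      exact hX.connected_induce_diff_singleton ha hne hself z
  -- An edge of `H` realised through `a` must be `uw`, and `u₀a` realises it after the move.
  have key : ∀ p q α β, H.Adj p q → α ∈ X p → β ∈ X q → G.Adj α β → β ≠ a →
      ∃ α' ∈ Paper.moveTo X a w p, ∃ β' ∈ Paper.moveTo X a w q, G.Adj α' β' := by
    intro p q α β hpq hα hβ hαβ hβa
    by_cases hαa : α = a
    · subst hαa
      obtain rfl := hX.eq_of_mem ha hα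
      obtain rfl : q = w := by
        rcases hN ⟨hαβ, q, Or.inr hpq, hβ⟩ with rfl | hβw
        · exact absurd (hX.eq_of_mem hu₀ hβ) hpq.ne
        · exact hX.eq_of_mem hβ hβw
      exact ⟨u₀, Or.inr ⟨hau₀.ne', hu₀⟩, α, Or.inl ⟨rfl, rfl⟩, hau₀.symm⟩
    · exact ⟨α, Or.inr ⟨hαa, hα⟩, β, Or.inr ⟨hβa, hβ⟩, hαβ⟩
  intro p q hpq
  obtain ⟨α, hα, β, hβ, hαβ⟩ := hX.2.2 p q hpq
  by_cases hβa : β = a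
  · obtain ⟨β', hβ', α', hα', h⟩ :=
      key q p β α hpq.symm hβ hα hαβ.symm fun h => hαβ.ne (h.trans hβa.symm)
    exact ⟨α', hα', β', hβ', h.symm⟩
  · exact key p q α β hpq hα hβ hαβ hβa

lemma nonInducedEdges_moveTo_subset (hX : IsMinorModel G H X) {S : Set W}
    (hN : G.neighborSet a ⊆ closedNbhdUnion H X w) :
    nonInducedEdges G H (Paper.moveTo X a w) S ⊆ {e ∈ nonInducedEdges G H X S | e.1 ≠ a} := by
  have key : ∀ x y z z', G.Adj x y → x ∈ Paper.moveTo X a w z → y ∈ Paper.moveTo X a w z' →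
      z ≠ z' → ¬ H.Adj z z' → y ≠ a := by
    rintro x y z z' hxy hx hy hzz' hnadj rfl
    have hz' : z' = w := (hy.resolve_right fun h => h.1 rfl).2
    have hx' : x ∈ X z := (hx.resolve_left fun h => hxy.ne h.1).2
    rcases (hX.mem_closedNbhdUnion_iff hx').mp (hN hxy.symm) with rfl | h
    · exact hzz' hz'.symm
    · exact hnadj (hz' ▸ h.symm)
  rintro ⟨x, y⟩ ⟨hxy, z, hz, z', hz', hzz', hnadj, hx, hy⟩
  have hya := key x y z z' hxy hx hy hzz' hnadj
  have hxa := key y x z' z hxy.symm hy hx hzz'.symm fun h => hnadj h.symm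
  exact ⟨⟨hxy, z, hz, z', hz', hzz', hnadj, (hx.resolve_left fun h => hxa h.1).2,
    (hy.resolve_left fun h => hya h.1).2⟩, hxa⟩

end IsMinorModel

namespace IsMinimalMinorModel

variable [Finite V]

lemma of_iUnion_subset (hX : IsMinimalMinorModel G H X) {Y : W → Set V}
    (hY : IsMinorModel G H Y) (hYX : ⋃ z, Y z ⊆ ⋃ z, X z) : IsMinimalMinorModel G H Y := by
  have hle := Set.ncard_le_ncard hYX
  exact ⟨hY, fun Z hZ hZY => hle.trans (hX.2 hZ (hZY.trans hle))⟩

lemma exists_adj_of_subsingleton (hX : IsMinimalMinorModel G H X) (ha : a ∈ X u)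
    (hne : (X u \ {a}).Nonempty) (hsub : (G.neighborSet a ∩ X u).Subsingleton) :
    ∃ z, H.Adj u z ∧ ∃ y ∈ X z, G.Adj a y := by
  by_contra! hout
  have hlt : (⋃ z, X z \ {a}).ncard < (⋃ z, X z).ncard := by
    rw [← Set.iUnion_sdiff]
    exact Set.ncard_sdiff_singleton_lt_of_mem (Set.mem_iUnion.mpr ⟨u, ha⟩)
  exact hlt.not_ge (hX.2 (hX.1.diff_singleton ha hne hsub hout) hlt.le)

lemma nontrivial_neighborSet_inter (hX : IsMinimalMinorModel G H X) (ha : a ∈ X u)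
    (hu : 2 < (H.neighborSet u).ncard) :
    (G.neighborSet a ∩ closedNbhdUnion H X u).Nontrivial := by
  rcases Set.eq_singleton_or_nontrivial ha with hXu | hnt
  · have := hX.1.two_lt_ncard_neighborSet_inter hXu hu
    exact Set.one_lt_ncard_iff_nontrivial.mp (by omega)
  obtain ⟨p, hp, hap⟩ := exists_adj_of_connected_induce (hX.1.2.1 u) hnt ha
  by_cases hsub : (G.neighborSet a ∩ X u).Subsingleton
  · obtain ⟨z, huz, q, hq, haq⟩ := hX.exists_adj_of_subsingleton ha (hnt.exists_ne a) hsub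
    exact ⟨p, ⟨hap, u, Or.inl rfl, hp⟩, q, ⟨haq, z, Or.inr huz, hq⟩,
      fun h => huz.ne (hX.1.eq_of_mem hp (h ▸ hq))⟩
  · exact (Set.not_subsingleton_iff.mp hsub).mono
      (Set.inter_subset_inter_right _ fun y hy => ⟨u, Or.inl rfl, hy⟩)

lemma two_lt_ncard_neighborSet (hX : IsMinimalMinorModel G H X) (ha : a ∈ X u)
    (hu : 2 < (H.neighborSet u).ncard) {b : V} (hab : G.Adj a b)
    (hb : b ∉ closedNbhdUnion H X u) : 2 < (G.neighborSet a).ncard := by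
  obtain ⟨x, hx, y, hy, hxy⟩ := hX.nontrivial_neighborSet_inter ha hu
  refine (Set.two_lt_ncard_iff).mpr ⟨x, y, b, hx.1, hy.1, hab, hxy, ?_, ?_⟩
  · rintro rfl; exact hb hx.2
  · rintro rfl; exact hb hy.2

lemma mem_closedNbhdUnion_of_subset_pair (hX : IsMinimalMinorModel G H X) (ha : a ∈ X u)
    (hu : 2 < (H.neighborSet u).ncard) {x c : V}
    (hN : G.neighborSet a ∩ closedNbhdUnion H X u ⊆ {x, c}) :
    c ∈ closedNbhdUnion H X u ∧ (c ∉ X u → x ∈ X u) := by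
  constructor
  · obtain ⟨s, hs, t, ht, hst⟩ := hX.nontrivial_neighborSet_inter ha hu
    rcases hN hs with rfl | rfl
    · rcases hN ht with rfl | rfl
      · exact absurd rfl hst
      · exact ht.2
    · exact hs.2
  · intro hc
    obtain ⟨p, hp, hap⟩ : ∃ p ∈ X u, G.Adj a p := by
      rcases Set.eq_singleton_or_nontrivial ha with hXu | hnt
      · have h3 := hX.1.two_lt_ncard_neighborSet_inter hXu hu
        have h2 := (Set.ncard_le_ncard hN).trans (Set.ncard_insert_le x {c})
        rw [Set.ncard_singleton] at h2
        omega
      · exact exists_adj_of_connected_induce (hX.1.2.1 u) hnt ha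
    rcases hN ⟨hap, u, Or.inl rfl, hp⟩ with rfl | rfl
    · exact hp
    · exact absurd hp hc

end IsMinimalMinorModel

lemma IsMinorModel.isInducedMinorModel_comp {W' : Type} {H' : SimpleGraph W'}
    (hX : IsMinorModel G H X) (f : H' ↪g H) (hf : nonInducedEdges G H X (Set.range f) = ∅) :
    IsInducedMinorModel G H' (X ∘ f) := by
  refine ⟨⟨fun p q hpq => hX.1 (f.injective.ne hpq), fun p => hX.2.1 (f p),
    fun p q hpq => hX.2.2 _ _ (f.map_adj_iff.mpr hpq)⟩, ?_⟩
  intro p q hpq hnadj x hx y hy hxy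
  exact Set.eq_empty_iff_forall_notMem.mp hf (x, y) ⟨hxy, f p, ⟨p, rfl⟩, f q, ⟨q, rfl⟩,
    f.injective.ne hpq, fun h => hnadj (f.map_adj_iff.mp h), hx, hy⟩

end MinorModel

section Sparsifiable

variable {V : Type} {G : SimpleGraph V}

lemma SparsifiableVertex.ncard_neighborSet_le_three {v : V} (h : SparsifiableVertex G v) :
    (G.neighborSet v).ncard ≤ 3 := by
  rcases h with h | h | ⟨u, w₁, w₂, hu₁, hu₂, h₁₂, hN, -, -⟩
  · omega
  · exact h.1.le
  · exact (Set.ncard_eq_three.mpr ⟨u, w₁, w₂, hu₁, hu₂, h₁₂, hN⟩).le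

lemma SparsifiableVertex.exists_neighborSet_eq_triangle {a b : V} (h : SparsifiableVertex G a)
    (ha : 2 < (G.neighborSet a).ncard) (hb : 2 < (G.neighborSet b).ncard) (hab : G.Adj a b) :
    ∃ u₀ c, G.neighborSet a = {u₀, b, c} ∧ G.Adj b c := by
  rcases h with h | h | ⟨u, w₁, w₂, -, -, -, hN, hu, hw⟩
  · omega
  · exact absurd (h.2 b hab) (by omega)
  · have hb' : b ∈ ({u, w₁, w₂} : Set V) := hN ▸ hab
    rcases hb' with rfl | rfl | rfl
    · omega
    · exact ⟨u, w₂, hN, hw⟩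
    · exact ⟨u, w₁, hN.trans (by rw [Set.pair_comm]), hw.symm⟩

variable {W : Type} {H : SimpleGraph W} {X : W → Set V} {S : Set W}

lemma IsMinimalMinorModel.exists_moveTo_of_mem_nonInducedEdges [Finite V]
    (hG : Sparsifiable G) (hX : IsMinimalMinorModel G H X)
    (hS : ∀ u ∈ S, 2 < (H.neighborSet u).ncard) {a b : V}
    (he : (a, b) ∈ nonInducedEdges G H X S) :
    ∃ u w, a ∈ X u ∧ IsMinorModel G H (moveTo X a w) ∧
      G.neighborSet a ⊆ closedNbhdUnion H X w := by
  obtain ⟨(hab : G.Adj a b), u, hu, v, hv, huv, hnadj, (ha : a ∈ X u), (hb : b ∈ X v)⟩ := he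
  have hbu : b ∉ closedNbhdUnion H X u := by
    rw [hX.1.mem_closedNbhdUnion_iff hb]
    exact fun h => h.elim (fun h => huv h.symm) hnadj
  have hav : a ∉ closedNbhdUnion H X v := by
    rw [hX.1.mem_closedNbhdUnion_iff ha]
    exact fun h => h.elim huv fun h => hnadj h.symm
  obtain ⟨u₀, c, hNa, hbc⟩ := (hG a).exists_neighborSet_eq_triangle
    (hX.two_lt_ncard_neighborSet ha (hS u hu) hab hbu)
    (hX.two_lt_ncard_neighborSet hb (hS v hv) hab.symm hav) hab
  have hau₀ : G.Adj a u₀ := by simp [← mem_neighborSet, hNa]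
  have hac : G.Adj a c := by simp [← mem_neighborSet, hNa]
  obtain ⟨v₀, hNb⟩ := exists_subset_triple_of_ncard_le_three
    (hG b).ncard_neighborSet_le_three hab.symm hbc hac.ne
  obtain ⟨⟨w, hw, hcw⟩, hu₀⟩ := hX.mem_closedNbhdUnion_of_subset_pair ha (hS u hu) (x := u₀)
    fun y ⟨hy, hyB⟩ => by
      rw [hNa] at hy
      rcases hy with rfl | rfl | rfl
      exacts [Or.inl rfl, absurd hyB hbu, Or.inr rfl]
  obtain ⟨hcv, -⟩ := hX.mem_closedNbhdUnion_of_subset_pair hb (hS v hv) (x := v₀)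
    fun y ⟨hy, hyB⟩ => by
      rcases hNb hy with rfl | rfl | rfl
      exacts [Or.inl rfl, absurd hyB hav, Or.inr rfl]
  -- `X w ∋ c` meets the closed neighbourhoods of both `u` and `v`, which are distinct and
  -- non-adjacent, so `w` is a common neighbour of `u` and `v`.
  rw [hX.1.mem_closedNbhdUnion_iff hcw] at hcv
  have huw : H.Adj u w := hw.resolve_left <| by
    rintro rfl
    exact hcv.elim huv fun h => hnadj h.symm
  have hvw : H.Adj v w := hcv.resolve_left <| by
    rintro rfl
    exact hw.elim (fun h => huv h.symm) hnadj
  have hu₀u : u₀ ∈ X u := hu₀ fun h => huw.ne (hX.1.eq_of_mem h hcw)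
  refine ⟨u, w, ha, hX.1.moveTo ha huw hu₀u hau₀ hcw hac fun y ⟨hy, hyB⟩ => ?_, fun y hy => ?_⟩
  all_goals
    rw [hNa] at hy
    rcases hy with rfl | rfl | rfl
  exacts [Or.inl rfl, absurd hyB hbu, Or.inr hcw,
    ⟨u, Or.inr huw.symm, hu₀u⟩, ⟨v, Or.inr hvw.symm, hb⟩, ⟨w, Or.inl rfl, hcw⟩]

theorem IsMinimalMinorModel.exists_nonInducedEdges_ssubset [Finite V] (hG : Sparsifiable G)
    (hX : IsMinimalMinorModel G H X) (hS : ∀ u ∈ S, 2 < (H.neighborSet u).ncard) {a b : V}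
    (he : (a, b) ∈ nonInducedEdges G H X S) :
    ∃ Y, IsMinimalMinorModel G H Y ∧ nonInducedEdges G H Y S ⊂ nonInducedEdges G H X S := by
  obtain ⟨u, w, ha, hY, hN⟩ := hX.exists_moveTo_of_mem_nonInducedEdges hG hS he
  have hsub := hX.1.nonInducedEdges_moveTo_subset (S := S) hN
  exact ⟨moveTo X a w, hX.of_iUnion_subset hY (iUnion_moveTo_subset ha),
    (Set.ssubset_iff_of_subset (hsub.trans (Set.sep_subset _ _))).mpr
      ⟨(a, b), he, fun h => (hsub h).2 rfl⟩⟩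

theorem Sparsifiable.containsInducedMinor_of_embedding [Finite V] (hG : Sparsifiable G)
    (hminor : ContainsMinor G H) {W' : Type} {H' : SimpleGraph W'} (f : H' ↪g H)
    (hf : ∀ p, 2 < (H.neighborSet (f p)).ncard) : ContainsInducedMinor G H' := by
  have hS : ∀ u ∈ Set.range f, 2 < (H.neighborSet u).ncard := by
    rintro _ ⟨p, rfl⟩
    exact hf p
  obtain ⟨X₀, hX₀⟩ := exists_minimalFor_of_wellFoundedLT _ (fun X => (⋃ z, X z).ncard) hminor
  obtain ⟨X, hX, hXmin⟩ := exists_minimalFor_of_wellFoundedLT (IsMinimalMinorModel G H)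
    (fun X => (nonInducedEdges G H X (Set.range f)).ncard) ⟨X₀, hX₀⟩
  refine ⟨X ∘ f, hX.1.isInducedMinorModel_comp f (Set.eq_empty_iff_forall_notMem.mpr ?_)⟩
  rintro ⟨a, b⟩ he
  obtain ⟨Y, hY, hlt⟩ := hX.exists_nonInducedEdges_ssubset hG hS he
  have hlt' := Set.ncard_lt_ncard hlt
  exact hlt'.not_ge (hXmin hY hlt'.le)

end Sparsifiable

def gridInnerEmbedding (k : ℕ) : grid (k - 2) ↪g grid k where
  toFun p := (⟨p.1 + 1, by have := p.1.2; omega⟩, ⟨p.2 + 1, by have := p.2.2; omega⟩)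
  inj' p q h := by
    simp only [Prod.mk.injEq, Fin.mk.injEq, Nat.add_right_cancel_iff] at h
    exact Prod.ext (Fin.ext h.1) (Fin.ext h.2)
  map_rel_iff' {p q} := by
    change Nat.dist (p.1 + 1) (q.1 + 1) + Nat.dist (p.2 + 1) (q.2 + 1) = 1 ↔ _
    rw [Nat.dist_add_add_right, Nat.dist_add_add_right]
    rfl

lemma two_lt_ncard_neighborSet_gridInnerEmbedding {k : ℕ} (p : Fin (k - 2) × Fin (k - 2)) :
    2 < ((grid k).neighborSet (gridInnerEmbedding k p)).ncard := by
  obtain ⟨⟨i, hi⟩, ⟨j, hj⟩⟩ := p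
  change 2 < ((grid k).neighborSet (⟨i + 1, by omega⟩, ⟨j + 1, by omega⟩)).ncard
  rw [Set.two_lt_ncard_iff]
  refine ⟨(⟨i, by omega⟩, ⟨j + 1, by omega⟩), (⟨i + 2, by omega⟩, ⟨j + 1, by omega⟩),
    (⟨i + 1, by omega⟩, ⟨j, by omega⟩), ?_, ?_, ?_, ?_, ?_, ?_⟩ <;>
    simp [grid, Nat.dist]

theorem grid_inducedMinor_of_grid_minor_of_sparsifiable_general (k : ℕ)
    {V : Type} [Fintype V] (G : SimpleGraph V)
    (hG : Sparsifiable G) (hminor : ContainsMinor G (grid k)) :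
    ContainsInducedMinor G (grid (k - 2)) :=
  hG.containsInducedMinor_of_embedding hminor (gridInnerEmbedding k)
    two_lt_ncard_neighborSet_gridInnerEmbedding

theorem grid_inducedMinor_of_grid_minor_of_sparsifiable (k : ℕ) (hk : 3 ≤ k)
    {V : Type} [Fintype V] (G : SimpleGraph V)
    (hG : Sparsifiable G) (hminor : ContainsMinor G (grid k)) :
    ContainsInducedMinor G (grid (k - 2)) :=
  grid_inducedMinor_of_grid_minor_of_sparsifiable_general k G hG hminor

end Paper
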